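/- arXiv:0902.0557 — 2 statements merged into one kernel-verified Lean document; each statement's English description precedes it below -/
import Mathlib

section
/- Let C ≥ 1, let t > d be an integer, let s > d + t be real, and let f_k : ℝ^d → ℂ be measurable functions with |f_k(x)| ≤ C(1+|x-k|)^{-s} for all x ∈ ℝ^d and k ∈ ℤ^d. If a sequence (c_k) of complex numbers satisfies |c_k| ≤ α(1+|k-j|)^{-t} for some α > 0 and a fixed j ∈ ℤ^d, then the series f(x) = ∑_k c_k f_k(x) converges absolutely pointwise and |f(x)| ≤ c^t · α C (1+|x-j|)^{-t} for all x ∈ ℝ^d, where c > 0 depends only on d. -/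
/-!
Since `1 + |x - j| ≤ (1 + |x - k|) + (1 + |k - j|)`, one of the two summands is at least
`(1 + |x - j|) / 2`. Spending the decay `t` on that factor and a decay `e = d + 1` on the other
bounds the `k`-th term by `2^t α C (1 + |x - j|)^{-t}` times
`(1 + |k - j|)^{-e} + (1 + |x - k|)^{-e}`. Since `e > d`, both families are summable over `ℤ^d`,
with sums at most `2^e ∑_k (1 + |k|)^{-e}` (round `x` to the nearest lattice point).
-/

open Finset in
theorem summable_pi_prod {ι β : Type*} [Fintype ι] {g : β → ℝ} (hg0 : 0 ≤ g)
    (hg : Summable g) : Summable fun k : ι → β => ∏ i, g (k i) := by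
  classical
  refine summable_of_sum_le (c := ∏ _i : ι, ∑' b, g b)
    (fun k => prod_nonneg fun i _ => hg0 _) fun u => ?_
  set t : ι → Finset β := fun i => u.image (· i)
  calc ∑ k ∈ u, ∏ i, g (k i) ≤ ∑ k ∈ Fintype.piFinset t, ∏ i, g (k i) :=
        sum_le_sum_of_subset_of_nonneg
          (fun k hk => Fintype.mem_piFinset.2 fun i => mem_image_of_mem _ hk)
          fun k _ _ => prod_nonneg fun i _ => hg0 _
    _ = ∏ i, ∑ b ∈ t i, g b := (prod_univ_sum t fun _ => g).symm
    _ ≤ ∏ _i : ι, ∑' b, g b :=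
        prod_le_prod (fun i _ => sum_nonneg fun b _ => hg0 b)
          fun i _ => hg.sum_le_tsum _ fun b _ => hg0 b

theorem summable_one_add_abs_intCast_rpow {p : ℝ} (hp : 1 < p) :
    Summable fun n : ℤ => (1 + |(n : ℝ)|) ^ (-p) := by
  refine (Real.summable_abs_int_rpow hp).of_norm_bounded_eventually ?_
  filter_upwards [Filter.eventually_cofinite_ne 0] with n hn
  have hn0 : 0 < |(n : ℝ)| := by simpa using hn
  rw [Real.norm_of_nonneg (by positivity)]
  exact Real.rpow_le_rpow_of_nonpos hn0 (by linarith) (by linarith)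

theorem summable_one_add_norm_rpow {ι : Type*} [Fintype ι] {e : ℝ}
    (he : (Fintype.card ι : ℝ) < e) : Summable fun k : ι → ℤ => (1 + ‖k‖) ^ (-e) := by
  rcases isEmpty_or_nonempty ι with hι | hι
  · exact .of_finite
  have hcard : (0 : ℝ) < Fintype.card ι := by exact_mod_cast Fintype.card_pos
  set p := e / Fintype.card ι
  have hp : 1 < p := by rwa [lt_div_iff₀ hcard, one_mul]
  refine (summable_pi_prod (fun n => by positivity) (summable_one_add_abs_intCast_rpow hp)
    (ι := ι)).of_nonneg_of_le (fun k => by positivity) fun k => ?_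
  calc (1 + ‖k‖) ^ (-e) = ∏ _i : ι, (1 + ‖k‖) ^ (-p) := by
        rw [Finset.prod_const, Finset.card_univ, ← Real.rpow_natCast,
          ← Real.rpow_mul (by positivity)]
        congr 1
        rw [neg_mul, div_mul_cancel₀ e hcard.ne']
    _ ≤ ∏ i, (1 + |(k i : ℝ)|) ^ (-p) := by
        refine Finset.prod_le_prod (fun i _ => by positivity) fun i _ => ?_
        refine Real.rpow_le_rpow_of_nonpos (by positivity) ?_ (by linarith)
        rw [← Real.norm_eq_abs, Int.norm_cast_real]
        linarith [norm_le_pi_norm k i]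

theorem div_two_rpow_neg {D : ℝ} (hD : 0 ≤ D) (t : ℝ) : (D / 2) ^ (-t) = 2 ^ t * D ^ (-t) := by
  rw [Real.div_rpow hD zero_le_two, Real.rpow_neg zero_le_two, div_inv_eq_mul, mul_comm]

theorem rpow_neg_mul_rpow_neg_le {A B D e t s : ℝ} (ht : 0 ≤ t) (het : e ≤ t) (hts : t ≤ s)
    (hA : 1 ≤ A) (hB : 1 ≤ B) (hD : 0 < D) (hDAB : D ≤ A + B) :
    B ^ (-t) * A ^ (-s) ≤ 2 ^ t * D ^ (-t) * (B ^ (-e) + A ^ (-e)) := by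
  have hhalf : ∀ X, D / 2 ≤ X → X ^ (-t) ≤ 2 ^ t * D ^ (-t) := fun X hX => by
    rw [← div_two_rpow_neg hD.le]
    exact Real.rpow_le_rpow_of_nonpos (by positivity) hX (by linarith)
  rcases le_total (D / 2) A with hDA | hDB
  · calc B ^ (-t) * A ^ (-s) ≤ B ^ (-e) * (2 ^ t * D ^ (-t)) := by
          refine mul_le_mul (Real.rpow_le_rpow_of_exponent_le hB (by linarith)) ?_
            (by positivity) (by positivity)
          exact (Real.rpow_le_rpow_of_exponent_le hA (by linarith)).trans (hhalf A hDA)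
      _ ≤ 2 ^ t * D ^ (-t) * (B ^ (-e) + A ^ (-e)) := by
          rw [mul_comm, mul_add]
          exact le_add_of_nonneg_right (by positivity)
  · calc B ^ (-t) * A ^ (-s) ≤ 2 ^ t * D ^ (-t) * A ^ (-e) :=
          mul_le_mul (hhalf B (by linarith)) (Real.rpow_le_rpow_of_exponent_le hA (by linarith))
            (by positivity) (by positivity)
      _ ≤ 2 ^ t * D ^ (-t) * (B ^ (-e) + A ^ (-e)) := by
          rw [mul_add]
          exact le_add_of_nonneg_left (by positivity)

theorem two_rpow_mul_le_rpow {K t : ℝ} (hK : 0 ≤ K) (ht : 1 ≤ t) :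
    2 ^ t * K ≤ (2 * (1 + K)) ^ t := by
  rw [Real.mul_rpow zero_le_two (by positivity)]
  gcongr
  calc K ≤ 1 + K := by linarith
    _ = (1 + K) ^ (1 : ℝ) := (Real.rpow_one _).symm
    _ ≤ (1 + K) ^ t := Real.rpow_le_rpow_of_exponent_le (by linarith) ht

section Lattice

variable {ι : Type*} [Fintype ι]

theorem norm_intCast_sub_intCast (k j : ι → ℤ) :
    ‖(fun i => (k i : ℝ)) - fun i => (j i : ℝ)‖ = ‖k - j‖ := by
  simp only [Pi.norm_def]
  congr 2
  ext i
  simp [← Int.norm_cast_real]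

theorem summable_one_add_norm_sub_rpow {e : ℝ} (he : (Fintype.card ι : ℝ) < e) (r : ι → ℤ) :
    Summable fun k : ι → ℤ => (1 + ‖k - r‖) ^ (-e) :=
  (Equiv.subRight r).summable_iff.2 (summable_one_add_norm_rpow he)

theorem tsum_one_add_norm_sub_rpow (e : ℝ) (r : ι → ℤ) :
    ∑' k : ι → ℤ, (1 + ‖k - r‖) ^ (-e) = ∑' k : ι → ℤ, (1 + ‖k‖) ^ (-e) :=
  (Equiv.subRight r).tsum_eq fun k => (1 + ‖k‖) ^ (-e)

theorem one_add_norm_sub_intCast_rpow_le {e : ℝ} (he : 0 ≤ e) {x : ι → ℝ} {r : ι → ℤ}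
    (hr : ‖x - fun i => (r i : ℝ)‖ ≤ 1 / 2) (k : ι → ℤ) :
    (1 + ‖x - fun i => (k i : ℝ)‖) ^ (-e) ≤ 2 ^ e * (1 + ‖k - r‖) ^ (-e) := by
  have hkr : ‖k - r‖ ≤ ‖x - fun i => (k i : ℝ)‖ + 1 / 2 := by
    rw [← norm_intCast_sub_intCast, norm_sub_rev x]
    exact (norm_sub_le_norm_sub_add_norm_sub _ x _).trans (by gcongr)
  rw [← div_two_rpow_neg (by positivity)]
  exact Real.rpow_le_rpow_of_nonpos (by positivity) (by linarith [norm_nonneg (k - r)])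
    (by linarith)

theorem exists_norm_sub_intCast_le_half (x : ι → ℝ) :
    ∃ r : ι → ℤ, ‖x - fun i => (r i : ℝ)‖ ≤ 1 / 2 :=
  ⟨fun i => round (x i), (pi_norm_le_iff_of_nonneg (by norm_num)).2 fun i => abs_sub_round (x i)⟩

theorem summable_one_add_norm_sub_intCast_rpow {e : ℝ} (he : (Fintype.card ι : ℝ) < e)
    (x : ι → ℝ) : Summable fun k : ι → ℤ => (1 + ‖x - fun i => (k i : ℝ)‖) ^ (-e) := by
  obtain ⟨r, hr⟩ := exists_norm_sub_intCast_le_half x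
  exact ((summable_one_add_norm_sub_rpow he r).mul_left _).of_nonneg_of_le
    (fun k => by positivity)
    (one_add_norm_sub_intCast_rpow_le ((Nat.cast_nonneg _).trans he.le) hr)

theorem tsum_one_add_norm_sub_intCast_rpow_le {e : ℝ} (he : (Fintype.card ι : ℝ) < e)
    (x : ι → ℝ) : ∑' k : ι → ℤ, (1 + ‖x - fun i => (k i : ℝ)‖) ^ (-e) ≤
      2 ^ e * ∑' k : ι → ℤ, (1 + ‖k‖) ^ (-e) := by
  obtain ⟨r, hr⟩ := exists_norm_sub_intCast_le_half x
  rw [← tsum_one_add_norm_sub_rpow e r, ← tsum_mul_left]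
  exact (summable_one_add_norm_sub_intCast_rpow he x).tsum_le_tsum
    (one_add_norm_sub_intCast_rpow_le ((Nat.cast_nonneg _).trans he.le) hr)
    ((summable_one_add_norm_sub_rpow he r).mul_left _)

end Lattice

theorem summable_norm_mul_and_norm_tsum_le {ι R : Type*} [Fintype ι] [NormedRing R]
    {e t s C α : ℝ} (he : (Fintype.card ι : ℝ) < e) (het : e ≤ t) (hts : t ≤ s)
    (hC : 0 ≤ C) (hα : 0 ≤ α) {g cs : (ι → ℤ) → R} {j : ι → ℤ} {x : ι → ℝ}
    (hg : ∀ k, ‖g k‖ ≤ C * (1 + ‖x - fun i => (k i : ℝ)‖) ^ (-s))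
    (hcs : ∀ k, ‖cs k‖ ≤ α * (1 + ‖k - j‖) ^ (-t)) :
    Summable (fun k => ‖cs k * g k‖) ∧
      ‖∑' k, cs k * g k‖ ≤ 2 ^ t * ((1 + 2 ^ e) * ∑' k : ι → ℤ, (1 + ‖k‖) ^ (-e)) *
        (α * C) * (1 + ‖x - fun i => (j i : ℝ)‖) ^ (-t) := by
  set D := 1 + ‖x - fun i => (j i : ℝ)‖
  set S := ∑' k : ι → ℤ, (1 + ‖k‖) ^ (-e)
  have ht : 0 ≤ t := (Nat.cast_nonneg _).trans (he.le.trans het)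
  set w : (ι → ℤ) → ℝ := fun k =>
    2 ^ t * D ^ (-t) * ((1 + ‖k - j‖) ^ (-e) + (1 + ‖x - fun i => (k i : ℝ)‖) ^ (-e))
  have hbound : ∀ k, ‖cs k * g k‖ ≤ α * C * w k := fun k => by
    have hDAB : D ≤ (1 + ‖x - fun i => (k i : ℝ)‖) + (1 + ‖k - j‖) := by
      have := norm_sub_le_norm_sub_add_norm_sub x (fun i => (k i : ℝ)) fun i => (j i : ℝ)
      rw [norm_intCast_sub_intCast] at this
      linarith
    calc ‖cs k * g k‖ ≤ ‖cs k‖ * ‖g k‖ := norm_mul_le _ _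
      _ ≤ α * (1 + ‖k - j‖) ^ (-t) * (C * (1 + ‖x - fun i => (k i : ℝ)‖) ^ (-s)) :=
          mul_le_mul (hcs k) (hg k) (norm_nonneg _) (by positivity)
      _ = α * C * ((1 + ‖k - j‖) ^ (-t) * (1 + ‖x - fun i => (k i : ℝ)‖) ^ (-s)) := by ring
      _ ≤ α * C * w k := by
          gcongr
          exact rpow_neg_mul_rpow_neg_le ht het hts (by simp) (by simp) (by positivity) hDAB
  have hw : Summable w :=
    ((summable_one_add_norm_sub_rpow he j).add
      (summable_one_add_norm_sub_intCast_rpow he x)).mul_left _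
  have htsum : ∑' k, w k ≤ 2 ^ t * D ^ (-t) * ((1 + 2 ^ e) * S) := by
    rw [tsum_mul_left, (summable_one_add_norm_sub_rpow he j).tsum_add
      (summable_one_add_norm_sub_intCast_rpow he x), tsum_one_add_norm_sub_rpow, add_mul, one_mul]
    gcongr
    exact tsum_one_add_norm_sub_intCast_rpow_le he x
  refine ⟨(hw.mul_left (α * C)).of_nonneg_of_le (fun _ => norm_nonneg _) hbound, ?_⟩
  calc ‖∑' k, cs k * g k‖ ≤ ∑' k, α * C * w k :=
        tsum_of_norm_bounded (hw.mul_left _).hasSum hbound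
    _ = α * C * ∑' k, w k := tsum_mul_left
    _ ≤ α * C * (2 ^ t * D ^ (-t) * ((1 + 2 ^ e) * S)) := by gcongr
    _ = 2 ^ t * ((1 + 2 ^ e) * S) * (α * C) * D ^ (-t) := by ring

theorem stmt6_general (d : ℕ) :
    ∃ c : ℝ, 0 < c ∧
      ∀ (C : ℝ) (t : ℤ) (s : ℝ) (f : (Fin d → ℤ) → (Fin d → ℝ) → ℂ),
        1 ≤ C → (d : ℤ) < t → (d : ℝ) + (t : ℝ) < s →
        (∀ k, Measurable (f k)) →
        (∀ k x, ‖f k x‖ ≤ C * (1 + ‖x - fun i => (k i : ℝ)‖) ^ (-s)) →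
        ∀ (cs : (Fin d → ℤ) → ℂ) (α : ℝ) (j : Fin d → ℤ), 0 < α →
          (∀ k, ‖cs k‖ ≤ α * (1 + ‖k - j‖) ^ (-(t : ℝ))) →
          ∀ x : Fin d → ℝ,
            Summable (fun k : Fin d → ℤ => ‖cs k * f k x‖) ∧
            ‖∑' k : Fin d → ℤ, cs k * f k x‖ ≤
              c ^ (t : ℝ) * (α * C) * (1 + ‖x - fun i => (j i : ℝ)‖) ^ (-(t : ℝ)) := by
  set e : ℝ := d + 1
  set K := (1 + 2 ^ e) * ∑' k : Fin d → ℤ, (1 + ‖k‖) ^ (-e)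
  have hK : 0 ≤ K := by positivity
  refine ⟨2 * (1 + K), by positivity, fun C t s f hC ht hs _ hf cs α j hα hcs x => ?_⟩
  have het : (d : ℝ) + 1 ≤ t := by exact_mod_cast Int.add_one_le_iff.2 ht
  obtain ⟨hsum, hle⟩ := summable_norm_mul_and_norm_tsum_le (by simp) het
    (by linarith) (by linarith) hα.le (hf · x) hcs
  refine ⟨hsum, hle.trans ?_⟩
  gcongr
  exact two_rpow_mul_le_rpow hK (by linarith)

/-- If `|f_k(x)| ≤ C(1+|x-k|)^{-s}` and `|c_k| ≤ α(1+|k-j|)^{-t}`, then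
`∑_k c_k f_k(x)` converges absolutely pointwise and is bounded by
`c^t · αC (1+|x-j|)^{-t}` with `c` depending only on `d`. -/
theorem stmt6 (d : ℕ) (hd : 1 ≤ d) :
    ∃ c : ℝ, 0 < c ∧
      ∀ (C : ℝ) (t : ℤ) (s : ℝ) (f : (Fin d → ℤ) → (Fin d → ℝ) → ℂ),
        1 ≤ C → (d : ℤ) < t → (d : ℝ) + (t : ℝ) < s →
        (∀ k, Measurable (f k)) →
        (∀ k x, ‖f k x‖ ≤ C * (1 + ‖x - fun i => (k i : ℝ)‖) ^ (-s)) →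
        ∀ (cs : (Fin d → ℤ) → ℂ) (α : ℝ) (j : Fin d → ℤ), 0 < α →
          (∀ k, ‖cs k‖ ≤ α * (1 + ‖k - j‖) ^ (-(t : ℝ))) →
          ∀ x : Fin d → ℝ,
            Summable (fun k : Fin d → ℤ => ‖cs k * f k x‖) ∧
            ‖∑' k : Fin d → ℤ, cs k * f k x‖ ≤
              c ^ (t : ℝ) * (α * C) * (1 + ‖x - fun i => (j i : ℝ)‖) ^ (-(t : ℝ)) :=
  stmt6_general d
end

section
/- Let A, B be bounded operators on ℓ^2(ℤ^d) given by matrices (a_{k,j}) and (b_{k,j}), and suppose D_h(A) and D_h(B), defined by D_h(L)_{k,j} = (k_h - j_h) l_{k,j}, are also bounded operators. Then D_h(AB) is bounded and D_h(AB) = D_h(A)B + A·D_h(B), i.e., D_h is a derivation on its domain. -/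
/-!
Writing `(L x)_k = ∑_l x_l L_{k,l}` (the expansion of `x` along the `lp.single` basis), the
`(k, j)` entry of `D(A) B + A D(B)` is `∑_l ((k_h - l_h) + (l_h - j_h)) a_{k,l} b_{l,j}`, and the
weights telescope to `k_h - j_h`.
-/

namespace lp

variable {ι 𝕜 : Type*} [NormedField 𝕜] [DecidableEq ι]

theorem hasSum_mul_map_single_apply {p q : ENNReal} [Fact (1 ≤ p)] [Fact (1 ≤ q)] (hp : p ≠ ⊤)
    (T : lp (fun _ : ι => 𝕜) p →L[𝕜] lp (fun _ : ι => 𝕜) q) (x : lp (fun _ : ι => 𝕜) p)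
    (k : ι) :
    HasSum (fun l => x l * (T (lp.single p l (1 : 𝕜)) : ι → 𝕜) k) ((T x : ι → 𝕜) k) := by
  refine ((lp.hasSum_single hp x).mapL ((lp.evalCLM 𝕜 _ q k).comp T)).congr_fun fun l => ?_
  have hsingle : (lp.single p l (x l) : lp (fun _ : ι => 𝕜) p) = x l • lp.single p l (1 : 𝕜) := by
    rw [← lp.single_smul, smul_eq_mul, mul_one]
  simp [hsingle, lp.evalCLM]

/-- The paper's `DA = D_h(A)` is the case `φ = (· h)`. -/
def IsMatrixDerivative {p : ENNReal} [Fact (1 ≤ p)] (φ : ι → 𝕜)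
    (A DA : lp (fun _ : ι => 𝕜) p →L[𝕜] lp (fun _ : ι => 𝕜) p) : Prop :=
  ∀ j k : ι, (DA (lp.single p j (1 : 𝕜)) : ι → 𝕜) k
    = (φ k - φ j) * (A (lp.single p j (1 : 𝕜)) : ι → 𝕜) k

theorem IsMatrixDerivative.comp {p : ENNReal} [Fact (1 ≤ p)] (hp : p ≠ ⊤) {φ : ι → 𝕜}
    {A B DA DB : lp (fun _ : ι => 𝕜) p →L[𝕜] lp (fun _ : ι => 𝕜) p}
    (hA : IsMatrixDerivative φ A DA) (hB : IsMatrixDerivative φ B DB) :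
    IsMatrixDerivative φ (A.comp B) (DA.comp B + A.comp DB) := by
  intro j k
  set b : lp (fun _ : ι => 𝕜) p := B (lp.single p j 1)
  have hDAB := hasSum_mul_map_single_apply hp DA b k
  have hADB := hasSum_mul_map_single_apply hp A (DB (lp.single p j 1)) k
  have hAB := (hasSum_mul_map_single_apply hp A b k).mul_left (φ k - φ j)
  simp only [hA _ k, hB j] at hDAB hADB
  refine (hDAB.add hADB).unique (hAB.congr_fun fun l => ?_)
  ring

end lp

theorem stmt10_general (d : ℕ) (h : Fin d)
    (A B DA DB : lp (fun _ : Fin d → ℤ => ℂ) 2 →L[ℂ] lp (fun _ : Fin d → ℤ => ℂ) 2)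
    (hDA : ∀ j k : Fin d → ℤ,
      (DA (lp.single 2 j (1 : ℂ)) : ∀ _ : Fin d → ℤ, ℂ) k
        = ((k h : ℂ) - (j h : ℂ)) * (A (lp.single 2 j (1 : ℂ)) : ∀ _ : Fin d → ℤ, ℂ) k)
    (hDB : ∀ j k : Fin d → ℤ,
      (DB (lp.single 2 j (1 : ℂ)) : ∀ _ : Fin d → ℤ, ℂ) k
        = ((k h : ℂ) - (j h : ℂ)) * (B (lp.single 2 j (1 : ℂ)) : ∀ _ : Fin d → ℤ, ℂ) k) :
    ∀ j k : Fin d → ℤ,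
      ((DA.comp B + A.comp DB) (lp.single 2 j (1 : ℂ)) : ∀ _ : Fin d → ℤ, ℂ) k
        = ((k h : ℂ) - (j h : ℂ)) *
            ((A.comp B) (lp.single 2 j (1 : ℂ)) : ∀ _ : Fin d → ℤ, ℂ) k :=
  lp.IsMatrixDerivative.comp (p := 2) (φ := fun l : Fin d → ℤ => (l h : ℂ)) ENNReal.ofNat_ne_top
    hDA hDB

/-- `D_h` is a derivation: if `A`, `B`, `D_h(A)`, `D_h(B)` are bounded operators on
`ℓ²(ℤ^d)` (where `D_h(L)_{k,j} = (k_h-j_h) l_{k,j}` on matrix entries), then `D_h(AB)` is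
bounded and `D_h(AB) = D_h(A)B + A·D_h(B)`; concretely the bounded operator
`D_h(A)∘B + A∘D_h(B)` has matrix entries `(k_h-j_h)·(AB)_{k,j}`. -/
theorem stmt10 (d : ℕ) (hd : 1 ≤ d) (h : Fin d)
    (A B DA DB : lp (fun _ : Fin d → ℤ => ℂ) 2 →L[ℂ] lp (fun _ : Fin d → ℤ => ℂ) 2)
    (hDA : ∀ j k : Fin d → ℤ,
      (DA (lp.single 2 j (1 : ℂ)) : ∀ _ : Fin d → ℤ, ℂ) k
        = ((k h : ℂ) - (j h : ℂ)) * (A (lp.single 2 j (1 : ℂ)) : ∀ _ : Fin d → ℤ, ℂ) k)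
    (hDB : ∀ j k : Fin d → ℤ,
      (DB (lp.single 2 j (1 : ℂ)) : ∀ _ : Fin d → ℤ, ℂ) k
        = ((k h : ℂ) - (j h : ℂ)) * (B (lp.single 2 j (1 : ℂ)) : ∀ _ : Fin d → ℤ, ℂ) k) :
    ∀ j k : Fin d → ℤ,
      ((DA.comp B + A.comp DB) (lp.single 2 j (1 : ℂ)) : ∀ _ : Fin d → ℤ, ℂ) k
        = ((k h : ℂ) - (j h : ℂ)) *
            ((A.comp B) (lp.single 2 j (1 : ℂ)) : ∀ _ : Fin d → ℤ, ℂ) k :=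
  stmt10_general d h A B DA DB hDA hDB
end
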